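/- Let a ≠ 0 and h ≠ 0 be real numbers, M the quotient of H × ℝ by the ℤ²-action (m, n) • (z, t) = (z + m·a, t + n·h), and π : H × ℝ → M the quotient map. For every s ∈ ℝ, the torus 𝕋(s) = π({z : im z = e^s} × ℝ), with the subspace topology from M, is homeomorphic to the 2-torus AddCircle a × AddCircle h. Moreover the sets 𝕋(s), s ∈ ℝ, are pairwise disjoint and their union is all of M (they foliate M). -/

import Mathlib

open UpperHalfPlane

/-- The action of `(m, n) ∈ ℤ²` on `ℍ × ℝ`: `(z, t) ↦ (z + m·a, t + n·h)`. -/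
def deckTranslate (a h : ℝ) (mn : ℤ × ℤ) (p : UpperHalfPlane × ℝ) : UpperHalfPlane × ℝ :=
  (((mn.1 : ℝ) * a) +ᵥ p.1, p.2 + (mn.2 : ℝ) * h)

/-- The orbit relation of the `ℤ²`-action on `ℍ × ℝ`. -/
def orbitRel (a h : ℝ) (p q : UpperHalfPlane × ℝ) : Prop :=
  ∃ mn : ℤ × ℤ, deckTranslate a h mn q = p

/-- The torus `𝕋(s) ⊆ M = (ℍ × ℝ)/ℤ²`: the image under the quotient map of
`c(eˢ) × ℝ`, where `c(r) = {z : im z = r}` is a horocycle. -/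
def torus (a h : ℝ) (s : ℝ) : Set (Quot (orbitRel a h)) :=
  Quot.mk (orbitRel a h) ''
    ({z : UpperHalfPlane | z.im = Real.exp s} ×ˢ (Set.univ : Set ℝ))

/-!
The height `[z, t] ↦ im z` is invariant under the translations, so it descends to `M`, and
`𝕋(s)` is its level set at `eˢ`; this gives the foliation. On a level set the point is
determined by `re z` modulo `a` and `t` modulo `h`, and conversely `(x, t)` mod `(a, h)` lifts
back to `[x + i eˢ, t]`; both maps are continuous, so they form a homeomorphism onto the
2-torus.
-/

lemma AddCircle.coe_add_zsmul {𝕜 : Type*} [AddCommGroup 𝕜] (p x : 𝕜) (n : ℤ) :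
    ((x + n • p : 𝕜) : AddCircle p) = x := by
  rw [AddCircle.coe_add, AddCircle.coe_zsmul, AddCircle.coe_period, smul_zero, add_zero]

noncomputable def horocyclePoint (s x : ℝ) : ℍ :=
  ⟨⟨x, Real.exp s⟩, Real.exp_pos s⟩

lemma horocyclePoint_re_of_im_eq {s : ℝ} {z : ℍ} (hz : z.im = Real.exp s) :
    horocyclePoint s z.re = z :=
  ext_re_im rfl hz.symm

lemma horocyclePoint_add (s r x : ℝ) : horocyclePoint s (r + x) = r +ᵥ horocyclePoint s x :=
  ext_re_im rfl (vadd_im r _).symm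

lemma continuous_horocyclePoint (s : ℝ) : Continuous (horocyclePoint s) := by
  have hcoe : ((↑) ∘ horocyclePoint s : ℝ → ℂ) = fun x : ℝ => (x : ℂ) + Real.exp s * Complex.I :=
    funext fun x => Complex.mk_eq_add_mul_I x (Real.exp s)
  rw [isEmbedding_coe.continuous_iff, hcoe]
  fun_prop

section Quotient

variable (a h : ℝ)

lemma mk_deckTranslate (mn : ℤ × ℤ) (p : ℍ × ℝ) :
    Quot.mk (orbitRel a h) (deckTranslate a h mn p) = Quot.mk (orbitRel a h) p :=
  Quot.sound ⟨mn, rfl⟩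

def height : Quot (orbitRel a h) → ℝ :=
  Quot.lift (fun p => p.1.im) (by
    rintro p q ⟨mn, rfl⟩
    exact vadd_im _ _)

lemma height_pos (q : Quot (orbitRel a h)) : 0 < height a h q := by
  induction q using Quot.ind with
  | mk p => exact p.1.im_pos

variable {a h} in
lemma mem_torus_iff {s : ℝ} {q : Quot (orbitRel a h)} :
    q ∈ torus a h s ↔ height a h q = Real.exp s := by
  induction q using Quot.ind with
  | mk p =>
    constructor
    · rintro ⟨p', ⟨hp', -⟩, hq⟩
      exact hq ▸ hp'
    · intro hp
      exact ⟨p, ⟨hp, trivial⟩, rfl⟩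

noncomputable def toAddCircleProd : Quot (orbitRel a h) → AddCircle a × AddCircle h :=
  Quot.lift (fun p => ((p.1.re : AddCircle a), (p.2 : AddCircle h))) (by
    rintro p q ⟨⟨m, n⟩, rfl⟩
    simp only [deckTranslate, vadd_re, add_comm _ q.1.re, ← zsmul_eq_mul, AddCircle.coe_add_zsmul])

@[simp]
lemma toAddCircleProd_mk (p : ℍ × ℝ) :
    toAddCircleProd a h (Quot.mk _ p) = ((p.1.re : AddCircle a), (p.2 : AddCircle h)) := rfl

lemma continuous_toAddCircleProd : Continuous (toAddCircleProd a h) :=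
  continuous_quot_lift _ <|
    (continuous_quotient_mk'.comp (continuous_re.comp continuous_fst)).prodMk
      (continuous_quotient_mk'.comp continuous_snd)

noncomputable def ofAddCircleProd (s : ℝ) (p : AddCircle a × AddCircle h) :
    Quot (orbitRel a h) :=
  Quotient.liftOn₂' p.1 p.2 (fun x t => Quot.mk (orbitRel a h) (horocyclePoint s x, t)) (by
    intro x t x' t' hx ht
    obtain ⟨m, hm⟩ := AddSubgroup.mem_zmultiples_iff.mp (QuotientAddGroup.leftRel_apply.mp hx)
    obtain ⟨n, hn⟩ := AddSubgroup.mem_zmultiples_iff.mp (QuotientAddGroup.leftRel_apply.mp ht)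
    rw [zsmul_eq_mul] at hm hn
    have hx' : x' = m * a + x := by linarith
    have ht' : t' = t + n * h := by linarith
    simp only [hx', ht', horocyclePoint_add]
    exact (mk_deckTranslate a h (m, n) _).symm)

@[simp]
lemma ofAddCircleProd_mk (s x t : ℝ) :
    ofAddCircleProd a h s ((x : AddCircle a), (t : AddCircle h)) =
      Quot.mk (orbitRel a h) (horocyclePoint s x, t) := rfl

lemma continuous_ofAddCircleProd (s : ℝ) : Continuous (ofAddCircleProd a h s) := by
  rw [← (QuotientAddGroup.isOpenQuotientMap_mk.prodMap
    QuotientAddGroup.isOpenQuotientMap_mk).continuous_comp_iff]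
  exact continuous_quot_mk.comp
    (((continuous_horocyclePoint s).comp continuous_fst).prodMk continuous_snd)

lemma height_ofAddCircleProd (s : ℝ) (p : AddCircle a × AddCircle h) :
    height a h (ofAddCircleProd a h s p) = Real.exp s := by
  obtain ⟨x, t⟩ := p
  induction x, t using Quotient.inductionOn₂' with
  | h x t => rfl

lemma toAddCircleProd_ofAddCircleProd (s : ℝ) (p : AddCircle a × AddCircle h) :
    toAddCircleProd a h (ofAddCircleProd a h s p) = p := by
  obtain ⟨x, t⟩ := p
  induction x, t using Quotient.inductionOn₂' with
  | h x t => rfl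

lemma ofAddCircleProd_toAddCircleProd {s : ℝ} {q : Quot (orbitRel a h)}
    (hq : height a h q = Real.exp s) : ofAddCircleProd a h s (toAddCircleProd a h q) = q := by
  induction q using Quot.ind with
  | mk p => simp only [toAddCircleProd_mk, ofAddCircleProd_mk, horocyclePoint_re_of_im_eq hq]

noncomputable def torusHomeomorph (s : ℝ) : ↥(torus a h s) ≃ₜ AddCircle a × AddCircle h where
  toFun q := toAddCircleProd a h q
  invFun p := ⟨ofAddCircleProd a h s p, mem_torus_iff.2 (height_ofAddCircleProd a h s p)⟩
  left_inv q := Subtype.ext <|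
    ofAddCircleProd_toAddCircleProd a h (mem_torus_iff.1 q.2)
  right_inv := toAddCircleProd_ofAddCircleProd a h s
  continuous_toFun := (continuous_toAddCircleProd a h).comp continuous_subtype_val
  continuous_invFun := (continuous_ofAddCircleProd a h s).subtype_mk _

end Quotient

theorem tori_foliate_quotient_general (a h : ℝ) :
    (∀ s : ℝ, Nonempty (↥(torus a h s) ≃ₜ AddCircle a × AddCircle h)) ∧
    (∀ s s' : ℝ, s ≠ s' → Disjoint (torus a h s) (torus a h s')) ∧
    (⋃ s : ℝ, torus a h s) = Set.univ := by
  refine ⟨fun s => ⟨torusHomeomorph a h s⟩, fun s s' hss' => ?_, ?_⟩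
  · refine Set.disjoint_left.2 fun q hq hq' => hss' (Real.exp_injective ?_)
    rw [← mem_torus_iff.1 hq, ← mem_torus_iff.1 hq']
  · refine Set.eq_univ_of_forall fun q => Set.mem_iUnion.2 ⟨Real.log (height a h q), ?_⟩
    exact mem_torus_iff.2 (Real.exp_log (height_pos a h q)).symm

/-- For `a ≠ 0` and `h ≠ 0`, each torus `𝕋(s)` in the quotient `M = (ℍ × ℝ)/ℤ²` (with the
subspace topology) is homeomorphic to the 2-torus `AddCircle a × AddCircle h`; moreover the
tori `𝕋(s)`, `s ∈ ℝ`, are pairwise disjoint and their union is all of `M`. -/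
theorem tori_foliate_quotient (a h : ℝ) (ha : a ≠ 0) (hh : h ≠ 0) :
    (∀ s : ℝ, Nonempty (↥(torus a h s) ≃ₜ AddCircle a × AddCircle h)) ∧
    (∀ s s' : ℝ, s ≠ s' → Disjoint (torus a h s) (torus a h s')) ∧
    (⋃ s : ℝ, torus a h s) = Set.univ :=
  tori_foliate_quotient_general a h
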